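/- In an implicative aBE algebra, for all x, y, z: ((y → x) → z) and x satisfy x → ((y → x) → z) = x → z. -/

import Mathlib

/-! Implicativity gives `x = (x ⮕ z) ⮕ x`, so by exchange `y ⮕ x` absorbs the premise `x ⮕ z`.
Exchanging the premises on the left-hand side then reduces the claim to implicativity at
`x ⮕ z` and `y ⮕ x`. -/

class ImplicativeABE (X : Type*) where
  imp : X → X → X
  one : X
  one_imp : ∀ x, imp one x = x
  imp_one : ∀ x, imp x one = one
  imp_self : ∀ x, imp x x = one
  exch : ∀ x y z, imp x (imp y z) = imp y (imp x z)
  antisymm : ∀ x y, imp x y = one → imp y x = one → x = y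
  implicative : ∀ x y, imp (imp x y) x = x

infixr:60 " ⮕ " => ImplicativeABE.imp
notation "𝟙" => ImplicativeABE.one

namespace ImplicativeABE

theorem imp_imp_imp_right_eq {X : Type*} [ImplicativeABE X] (x y u : X) :
    (x ⮕ u) ⮕ (y ⮕ x) = y ⮕ x := by
  conv_rhs => rw [← implicative x u, exch]

end ImplicativeABE

theorem stmt14 {X : Type*} [ImplicativeABE X] (x y z : X) :
    x ⮕ ((y ⮕ x) ⮕ z) = x ⮕ z :=
  calc x ⮕ ((y ⮕ x) ⮕ z) = (y ⮕ x) ⮕ (x ⮕ z) := ImplicativeABE.exch x (y ⮕ x) z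
    _ = ((x ⮕ z) ⮕ (y ⮕ x)) ⮕ (x ⮕ z) := by rw [ImplicativeABE.imp_imp_imp_right_eq]
    _ = x ⮕ z := ImplicativeABE.implicative (x ⮕ z) (y ⮕ x)
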